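/- arXiv:2512.01565 — 2 statements merged into one kernel-verified Lean document; each statement's English description precedes it below -/
import Mathlib

section
/- Let P be an n×n symmetric positive semidefinite matrix, q ∈ ℝⁿ, G an m×n matrix, h ∈ ℝᵐ, A a p×n matrix, b ∈ ℝᵖ. Suppose x* minimizes (1/2)xᵀPx + qᵀx subject to Gx ≤ h and Ax = b, with KKT multipliers y_I* ≥ 0 (inequalities) and y_E* (equalities) satisfying stationarity Px* + q + Gᵀy_I* + Aᵀy_E* = 0 and complementary slackness. Then for any μ_I ≥ ‖y_I*‖_∞ and μ_E ≥ ‖y_E*‖_∞ and any x ∈ ℝⁿ, φ(x) ≥ φ(x*), where φ(x) = (1/2)xᵀPx + qᵀx + μ_I·Σᵢ max(gᵢᵀx − hᵢ, 0) + μ_E·Σⱼ |aⱼᵀx − bⱼ|. That is, x* minimizes the exact ℓ₁-penalized objective. -/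
/-!
Write `d = x - x*`. Convexity of the quadratic part `f` gives
`f(x) ≥ f(x*) + (Px* + q)ᵀd`, and stationarity turns the linear term into
`-y_Iᵀ(Gx - Gx*) - y_Eᵀ(Ax - b)`. By complementary slackness `y_Iᵀ(Gx - Gx*) = y_Iᵀ(Gx - h)`,
which is at most `‖y_I‖_∞ Σᵢ max(gᵢᵀx - hᵢ, 0)`; likewise `y_Eᵀ(Ax - b) ≤ ‖y_E‖_∞ Σⱼ |aⱼᵀx - bⱼ|`.
The penalties vanish at the feasible point `x*`.
-/

open Matrix

theorem Matrix.IsSymm.dotProduct_mulVec_comm {ι α : Type*} [Fintype ι] [CommSemiring α]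
    {P : Matrix ι ι α} (hP : P.IsSymm) (x y : ι → α) :
    x ⬝ᵥ P *ᵥ y = y ⬝ᵥ P *ᵥ x := by
  rw [dotProduct_mulVec, ← mulVec_transpose, hP.eq, dotProduct_comm]

theorem Matrix.PosSemidef.quadratic_tangent_le {ι : Type*} [Fintype ι] {P : Matrix ι ι ℝ}
    (hP : P.PosSemidef) (q x y : ι → ℝ) :
    (1/2) * (y ⬝ᵥ P *ᵥ y) + q ⬝ᵥ y + (P *ᵥ y + q) ⬝ᵥ (x - y)
      ≤ (1/2) * (x ⬝ᵥ P *ᵥ x) + q ⬝ᵥ x := by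
  have hd : 0 ≤ (x - y) ⬝ᵥ P *ᵥ (x - y) := hP.dotProduct_mulVec_nonneg (x - y)
  have hxy := (isHermitian_iff_isSymm.mp hP.isHermitian).dotProduct_mulVec_comm x y
  simp only [mulVec_sub, dotProduct_sub, sub_dotProduct, add_dotProduct] at hd ⊢
  rw [dotProduct_comm (P *ᵥ y) x, dotProduct_comm (P *ᵥ y) y]
  linarith

section Penalty

variable {ι : Type*} [Fintype ι]

theorem dotProduct_sub_le_mul_sum_max {y u v c : ι → ℝ} {μ : ℝ}
    (hy : ∀ i, 0 ≤ y i) (hμ : ‖y‖ ≤ μ) (hcs : ∀ i, y i * (v i - c i) = 0) :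
    y ⬝ᵥ (u - v) ≤ μ * ∑ i, max (u i - c i) 0 := by
  rw [dotProduct, Finset.mul_sum]
  refine Finset.sum_le_sum fun i _ => ?_
  have hyμ : y i ≤ μ := (Real.le_norm_self _).trans ((norm_le_pi_norm y i).trans hμ)
  calc y i * (u - v) i = y i * (u i - c i) := by
        simp only [Pi.sub_apply]; linarith [hcs i]
    _ ≤ y i * max (u i - c i) 0 := mul_le_mul_of_nonneg_left (le_max_left _ _) (hy i)
    _ ≤ μ * max (u i - c i) 0 := mul_le_mul_of_nonneg_right hyμ (le_max_right _ _)

theorem dotProduct_sub_le_mul_sum_abs {y u c : ι → ℝ} {μ : ℝ} (hμ : ‖y‖ ≤ μ) :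
    y ⬝ᵥ (u - c) ≤ μ * ∑ i, |u i - c i| := by
  rw [dotProduct, Finset.mul_sum]
  refine Finset.sum_le_sum fun i _ => ?_
  calc y i * (u - c) i ≤ |y i| * |u i - c i| := by
        rw [← abs_mul]; exact le_abs_self _
    _ ≤ μ * |u i - c i| :=
        mul_le_mul_of_nonneg_right ((norm_le_pi_norm y i).trans hμ) (abs_nonneg _)

end Penalty

theorem dotProduct_eq_of_stationary {ι κ η : Type*} [Fintype ι] [Fintype κ] [Fintype η]
    {g : ι → ℝ} {G : Matrix κ ι ℝ} {A : Matrix η ι ℝ} {yI : κ → ℝ} {yE : η → ℝ}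
    (hstat : g + Gᵀ *ᵥ yI + Aᵀ *ᵥ yE = 0) (d : ι → ℝ) :
    g ⬝ᵥ d = -(yI ⬝ᵥ G *ᵥ d) - yE ⬝ᵥ A *ᵥ d := by
  have h := congrArg (· ⬝ᵥ d) hstat
  simp only [add_dotProduct, zero_dotProduct, mulVec_transpose] at h
  rw [dotProduct_mulVec yI, dotProduct_mulVec yE]
  linarith

theorem exact_l1_penalty_minimizer {n m p : ℕ}
    (P : Matrix (Fin n) (Fin n) ℝ) (q : Fin n → ℝ)
    (G : Matrix (Fin m) (Fin n) ℝ) (h : Fin m → ℝ)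
    (A : Matrix (Fin p) (Fin n) ℝ) (b : Fin p → ℝ)
    (hP : P.PosSemidef)
    (xs : Fin n → ℝ) (yI : Fin m → ℝ) (yE : Fin p → ℝ)
    (hstat : P.mulVec xs + q + Gᵀ.mulVec yI + Aᵀ.mulVec yE = 0)
    (hfeasI : ∀ i, G.mulVec xs i ≤ h i)
    (hfeasE : A.mulVec xs = b)
    (hyI : ∀ i, 0 ≤ yI i)
    (hcs : ∀ i, yI i * (G.mulVec xs i - h i) = 0)
    (μI μE : ℝ) (hμI : ‖yI‖ ≤ μI) (hμE : ‖yE‖ ≤ μE) :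
    ∀ x : Fin n → ℝ,
      (1/2) * (xs ⬝ᵥ P.mulVec xs) + q ⬝ᵥ xs
        + μI * ∑ i, max (G.mulVec xs i - h i) 0
        + μE * ∑ j, |A.mulVec xs j - b j|
      ≤ (1/2) * (x ⬝ᵥ P.mulVec x) + q ⬝ᵥ x
        + μI * ∑ i, max (G.mulVec x i - h i) 0
        + μE * ∑ j, |A.mulVec x j - b j| := by
  intro x
  have hpenI : ∑ i, max ((G *ᵥ xs) i - h i) 0 = 0 :=
    Finset.sum_eq_zero fun i _ => max_eq_right (sub_nonpos.2 (hfeasI i))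
  have hpenE : ∑ j, |(A *ᵥ xs) j - b j| = 0 := by simp [hfeasE]
  have htangent := hP.quadratic_tangent_le q x xs
  have hlin := dotProduct_eq_of_stationary hstat (x - xs)
  have hI := dotProduct_sub_le_mul_sum_max (u := G *ᵥ x) hyI hμI hcs
  have hE := dotProduct_sub_le_mul_sum_abs (u := A *ᵥ x) (c := b) hμE
  rw [mulVec_sub, mulVec_sub, hfeasE] at hlin
  simp only [hpenI, hpenE, mul_zero, add_zero]
  linarith
end

section
/- Let (x*, y_I*, y_E*) be a KKT point of the QP and suppose μ_I ≥ ‖y_I*‖_∞ componentwise can be relaxed: if μ_I ∈ ℝᵐ and μ_E ∈ ℝᵖ are vectors of penalty parameters with μ_{I,i} ≥ |y_{I,i}*| for all i and μ_{E,j} ≥ |y_{E,j}*| for all j, then x* minimizes the vector-weighted penalized objective φ(x) = (1/2)xᵀPx + qᵀx + Σᵢ μ_{I,i}·max(gᵢᵀx − hᵢ, 0) + Σⱼ μ_{E,j}·|aⱼᵀx − bⱼ| over ℝⁿ. -/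
/-! Since `P` is positive semidefinite, the quadratic part lies above its tangent at `xs`.
By stationarity its gradient at `xs` equals `-(Gᵀ yI + Aᵀ yE)`, so its
change along `x - xs` is `-(yI ⬝ᵥ (G x - h)) - yE ⬝ᵥ (A x - b)` once complementary slackness and
`A xs = b` are used. Each multiplier term is dominated by the corresponding penalty because
`|yI i| ≤ μI i`, `|yE j| ≤ μE j` and `yI ≥ 0`, while both penalties vanish at the feasible `xs`. -/

open Matrix

namespace Matrix

variable {ι : Type*} [Fintype ι]

theorem PosSemidef.mulVec_dotProduct_sub_le {P : Matrix ι ι ℝ} (hP : P.PosSemidef)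
    (x y : ι → ℝ) :
    (P *ᵥ y) ⬝ᵥ (x - y) ≤ (1/2) * (x ⬝ᵥ P *ᵥ x) - (1/2) * (y ⬝ᵥ P *ᵥ y) := by
  have hsymm : y ⬝ᵥ P *ᵥ x = x ⬝ᵥ P *ᵥ y := by
    rw [dotProduct_mulVec, ← mulVec_transpose, isHermitian_iff_isSymm.mp hP.1, dotProduct_comm]
  have hnonneg : 0 ≤ (x - y) ⬝ᵥ P *ᵥ (x - y) := hP.dotProduct_mulVec_nonneg (x - y)
  simp only [mulVec_sub, sub_dotProduct, dotProduct_sub] at hnonneg ⊢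
  rw [dotProduct_comm (P *ᵥ y) x, dotProduct_comm (P *ᵥ y) y]
  linarith

theorem transpose_mulVec_dotProduct {κ : Type*} [Fintype κ] (G : Matrix κ ι ℝ) (y : κ → ℝ)
    (v : ι → ℝ) : (Gᵀ *ᵥ y) ⬝ᵥ v = y ⬝ᵥ G *ᵥ v := by
  rw [mulVec_transpose, ← dotProduct_mulVec]

end Matrix

section Penalty

variable {ι : Type*} [Fintype ι] {y μ v : ι → ℝ}

theorem dotProduct_le_sum_mul_max_zero (hy : ∀ i, 0 ≤ y i) (hμ : ∀ i, |y i| ≤ μ i) :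
    y ⬝ᵥ v ≤ ∑ i, μ i * max (v i) 0 := by
  refine Finset.sum_le_sum fun i _ => ?_
  have hyμ : y i ≤ μ i := (abs_of_nonneg (hy i)).symm.trans_le (hμ i)
  rcases le_total (v i) 0 with hv | hv
  · rw [max_eq_right hv, mul_zero]
    exact mul_nonpos_of_nonneg_of_nonpos (hy i) hv
  · rw [max_eq_left hv]
    exact mul_le_mul_of_nonneg_right hyμ hv

theorem dotProduct_le_sum_mul_abs (hμ : ∀ i, |y i| ≤ μ i) :
    y ⬝ᵥ v ≤ ∑ i, μ i * |v i| :=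
  Finset.sum_le_sum fun i _ => calc
    y i * v i ≤ |y i| * |v i| := by rw [← abs_mul]; exact le_abs_self _
    _ ≤ μ i * |v i| := mul_le_mul_of_nonneg_right (hμ i) (abs_nonneg _)

end Penalty

theorem exact_l1_penalty_vector_weights {n m p : ℕ}
    (P : Matrix (Fin n) (Fin n) ℝ) (q : Fin n → ℝ)
    (G : Matrix (Fin m) (Fin n) ℝ) (h : Fin m → ℝ)
    (A : Matrix (Fin p) (Fin n) ℝ) (b : Fin p → ℝ)
    (hP : P.PosSemidef)
    (xs : Fin n → ℝ) (yI : Fin m → ℝ) (yE : Fin p → ℝ)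
    (hstat : P.mulVec xs + q + Gᵀ.mulVec yI + Aᵀ.mulVec yE = 0)
    (hfeasI : ∀ i, G.mulVec xs i ≤ h i)
    (hfeasE : A.mulVec xs = b)
    (hyI : ∀ i, 0 ≤ yI i)
    (hcs : ∀ i, yI i * (G.mulVec xs i - h i) = 0)
    (μI : Fin m → ℝ) (μE : Fin p → ℝ)
    (hμI : ∀ i, |yI i| ≤ μI i) (hμE : ∀ j, |yE j| ≤ μE j) :
    ∀ x : Fin n → ℝ,
      (1/2) * (xs ⬝ᵥ P.mulVec xs) + q ⬝ᵥ xs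
        + (∑ i, μI i * max (G.mulVec xs i - h i) 0)
        + (∑ j, μE j * |A.mulVec xs j - b j|)
      ≤ (1/2) * (x ⬝ᵥ P.mulVec x) + q ⬝ᵥ x
        + (∑ i, μI i * max (G.mulVec x i - h i) 0)
        + (∑ j, μE j * |A.mulVec x j - b j|) := by
  intro x
  have hquad := hP.mulVec_dotProduct_sub_le x xs
  have hgrad : P *ᵥ xs = -q - Gᵀ *ᵥ yI - Aᵀ *ᵥ yE := by
    rw [← sub_eq_zero, ← hstat]; abel
  have hslack : yI ⬝ᵥ (G *ᵥ xs - h) = 0 := Finset.sum_eq_zero fun i _ => hcs i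
  have hlinear : (P *ᵥ xs) ⬝ᵥ (x - xs)
      = -(q ⬝ᵥ (x - xs)) - yI ⬝ᵥ (G *ᵥ x - h) - yE ⬝ᵥ (A *ᵥ x - b) := by
    rw [hgrad, sub_dotProduct, sub_dotProduct, neg_dotProduct, transpose_mulVec_dotProduct,
      transpose_mulVec_dotProduct, mulVec_sub, mulVec_sub, hfeasE]
    rw [dotProduct_sub] at hslack
    simp only [dotProduct_sub]
    linarith
  have hI := dotProduct_le_sum_mul_max_zero (v := G *ᵥ x - h) hyI hμI
  have hE := dotProduct_le_sum_mul_abs (v := A *ᵥ x - b) hμE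
  have hzeroI : ∑ i, μI i * max ((G *ᵥ xs) i - h i) 0 = 0 :=
    Finset.sum_eq_zero fun i _ => by rw [max_eq_right (sub_nonpos.mpr (hfeasI i)), mul_zero]
  have hzeroE : ∑ j, μE j * |(A *ᵥ xs) j - b j| = 0 := by simp [hfeasE]
  simp only [dotProduct_sub, Pi.sub_apply] at hquad hlinear hI hE
  linarith
end
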